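/- arXiv:1508.02946 — 2 statements merged into one kernel-verified Lean document; each statement's English description precedes it below -/
import Mathlib

section
/- Let F be a finite metric space with at least two points. The following are equivalent: (i) F has no focal points; (ii) there exists a 2-covering 𝒰 of F with Δ(𝒰) < Δ(F); (iii) ∇(F) < Δ(F). -/
open Metric

namespace FinDim

variable {X : Type*} [MetricSpace X]

/-- `ν_F(a)`: the distance from `a` to a nearest other point of `F`. -/
noncomputable def nu (F : Finset X) (a : X) : ℝ :=
  sInf {r : ℝ | ∃ x ∈ F, x ≠ a ∧ r = dist a x}

/-- `δ(F)`: the separation of `F`, the minimum distance between distinct points. -/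
noncomputable def sep (F : Finset X) : ℝ :=
  sInf {r : ℝ | ∃ x ∈ F, ∃ y ∈ F, x ≠ y ∧ r = dist x y}

/-- A 2-covering of `F`: a family of subsets of `F` covering `F`,
each member having at least two elements. -/
def IsTwoCover (F : Finset X) (U : Finset (Finset X)) : Prop :=
  (∀ V ∈ U, V ⊆ F) ∧ (∀ V ∈ U, 2 ≤ V.card) ∧ ∀ a ∈ F, ∃ V ∈ U, a ∈ V

/-- `Δ(𝒰)`: maximum diameter of the members of the family `𝒰`. -/
noncomputable def coverDiam (U : Finset (Finset X)) : ℝ :=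
  sSup {r : ℝ | ∃ V ∈ U, r = Metric.diam (V : Set X)}

/-- `∇(F)`: the covering diameter of `F`. -/
noncomputable def nablaF (F : Finset X) : ℝ :=
  sInf {r : ℝ | ∃ U : Finset (Finset X), IsTwoCover F U ∧ r = coverDiam U}

/-- `a` is a focal point of `F`. -/
def IsFocal (F : Finset X) (a : X) : Prop :=
  a ∈ F ∧ ∀ x ∈ F, x ≠ a → dist a x = Metric.diam (F : Set X)

/-- `H^s_𝒰(F) = Σ_{U ∈ 𝒰} Δ(U)^s`. -/
noncomputable def Hcov (U : Finset (Finset X)) (s : ℝ) : ℝ :=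
  ∑ V ∈ U, Metric.diam (V : Set X) ^ s

/-- `H^s(F)`: minimum of `H^s_𝒰(F)` over 2-coverings `𝒰` with `Δ(𝒰) = ∇(F)`. -/
noncomputable def HH (F : Finset X) (s : ℝ) : ℝ :=
  sInf {h : ℝ | ∃ U : Finset (Finset X),
    IsTwoCover F U ∧ coverDiam U = nablaF F ∧ h = Hcov U s}

/-- The finite Hausdorff dimension: the unique `s₀ ∈ (0,∞)` with
`H^{s₀}(F) = Δ(F)^{s₀}` (when `F` has no focal points). -/
noncomputable def dimfH (F : Finset X) : ℝ :=
  sInf {s : ℝ | 0 < s ∧ HH F s = Metric.diam (F : Set X) ^ s}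

/-- `T_{∇(F)}(F)`: the minimal cardinality of a 2-covering `𝒰` with `Δ(𝒰) = ∇(F)`. -/
noncomputable def Tmin (F : Finset X) : ℕ :=
  sInf {n : ℕ | ∃ U : Finset (Finset X),
    IsTwoCover F U ∧ coverDiam U = nablaF F ∧ U.card = n}

/-- The finite box dimension `dim_fB(F) = ln T_{∇(F)}(F) / ln (Δ(F)/∇(F))`. -/
noncomputable def dimfB (F : Finset X) : ℝ :=
  Real.log (Tmin F) / Real.log (Metric.diam (F : Set X) / nablaF F)

/-- `ν_A(x)` for a subset `A` of a metric space. -/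
noncomputable def nuSet {Z : Type*} [MetricSpace Z] (A : Set Z) (x : Z) : ℝ :=
  sInf {r : ℝ | ∃ y ∈ A, y ≠ x ∧ r = dist x y}

/-- `∇(A) = sup {ν_A(x) : x ∈ A}` for a subset `A` of a metric space. -/
noncomputable def nablaSet {Z : Type*} [MetricSpace Z] (A : Set Z) : ℝ :=
  sSup {r : ℝ | ∃ x ∈ A, r = nuSet A x}

end FinDim

/-!
A point `a` fails to be focal exactly when some other point lies at distance `< Δ(F)` from it.
Pairing every point with such a partner gives a 2-covering by pairs of diameter `< Δ(F)`;
conversely, a member of a 2-covering containing a focal point also contains a second point,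
at distance `Δ(F)`. The equivalence with `∇(F) < Δ(F)` is the characterisation of an infimum
that is strictly below a bound, the set of covering diameters being nonempty (`{F}` is a
2-covering) and bounded below by `0`.
-/

namespace FinDim

variable {X : Type*} {F : Finset X} {U : Finset (Finset X)} {r : ℝ}

lemma isTwoCover_singleton (hF : 2 ≤ F.card) : IsTwoCover F {F} := by
  refine ⟨?_, ?_, fun a ha => ⟨F, Finset.mem_singleton_self F, ha⟩⟩ <;>
    simp only [Finset.mem_singleton, forall_eq]
  exacts [Finset.Subset.refl F, hF]

lemma IsTwoCover.exists_mem_ne (hU : IsTwoCover F U) {a : X} (ha : a ∈ F) :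
    ∃ V ∈ U, a ∈ V ∧ ∃ x ∈ V, x ≠ a := by
  obtain ⟨V, hV, haV⟩ := hU.2.2 a ha
  exact ⟨V, hV, haV, Finset.exists_mem_ne (hU.2.1 V hV) a⟩

variable [MetricSpace X]

lemma finite_diams (U : Finset (Finset X)) :
    {r : ℝ | ∃ V ∈ U, r = diam (V : Set X)}.Finite := by
  convert U.finite_toSet.image fun V : Finset X => diam (V : Set X) using 1
  ext r
  simp [eq_comm]

lemma diam_le_coverDiam {V : Finset X} (hV : V ∈ U) : diam (V : Set X) ≤ coverDiam U :=
  le_csSup (finite_diams U).bddAbove ⟨V, hV, rfl⟩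

lemma coverDiam_lt_iff (hU : U.Nonempty) : coverDiam U < r ↔ ∀ V ∈ U, diam (V : Set X) < r := by
  obtain ⟨V, hV⟩ := hU
  rw [coverDiam, (finite_diams U).csSup_lt_iff ⟨_, V, hV, rfl⟩]
  constructor
  · exact fun h W hW => h _ ⟨W, hW, rfl⟩
  · rintro h _ ⟨W, hW, rfl⟩
    exact h W hW

lemma IsTwoCover.coverDiam_nonneg (hU : IsTwoCover F U) (hF : F.Nonempty) : 0 ≤ coverDiam U := by
  obtain ⟨a, ha⟩ := hF
  obtain ⟨V, hV, -⟩ := hU.2.2 a ha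
  exact diam_nonneg.trans (diam_le_coverDiam hV)

lemma IsTwoCover.not_isFocal (hU : IsTwoCover F U) (hlt : coverDiam U < diam (F : Set X))
    (a : X) : ¬ IsFocal F a := by
  rintro ⟨ha, hfocal⟩
  obtain ⟨V, hV, haV, x, hxV, hxa⟩ := hU.exists_mem_ne ha
  have : dist a x ≤ coverDiam U :=
    (dist_le_diam_of_mem V.finite_toSet.isBounded haV hxV).trans (diam_le_coverDiam hV)
  rw [hfocal x (hU.1 V hV hxV) hxa] at this
  exact this.not_gt hlt

lemma exists_dist_lt_diam_of_not_isFocal {a : X} (ha : a ∈ F) (hnf : ¬ IsFocal F a) :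
    ∃ x ∈ F, x ≠ a ∧ dist a x < diam (F : Set X) := by
  simp only [IsFocal, ha, true_and, not_forall] at hnf
  obtain ⟨x, hx, hxa, hne⟩ := hnf
  exact ⟨x, hx, hxa, (dist_le_diam_of_mem F.finite_toSet.isBounded ha hx).lt_of_ne hne⟩

lemma exists_isTwoCover_coverDiam_lt (hF : F.Nonempty)
    (h : ∀ a ∈ F, ∃ x ∈ F, x ≠ a ∧ dist a x < r) :
    ∃ U, IsTwoCover F U ∧ coverDiam U < r := by
  classical
  choose! f hfF hfa hfr using h
  refine ⟨F.image fun a => {a, f a}, ⟨?_, ?_, ?_⟩, ?_⟩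
  · simp only [Finset.mem_image, forall_exists_index, and_imp, forall_apply_eq_imp_iff₂]
    exact fun a ha => Finset.insert_subset ha (Finset.singleton_subset_iff.2 (hfF a ha))
  · simp only [Finset.mem_image, forall_exists_index, and_imp, forall_apply_eq_imp_iff₂]
    exact fun a ha => (Finset.card_pair (hfa a ha).symm).ge
  · exact fun a ha => ⟨_, Finset.mem_image_of_mem _ ha, Finset.mem_insert_self a _⟩
  · rw [coverDiam_lt_iff (hF.image _)]
    simp only [Finset.mem_image, forall_exists_index, and_imp, forall_apply_eq_imp_iff₂]
    intro a ha
    rw [Finset.coe_pair, diam_pair]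
    exact hfr a ha

lemma nablaF_lt_iff (hF : 2 ≤ F.card) :
    nablaF F < r ↔ ∃ U, IsTwoCover F U ∧ coverDiam U < r := by
  have hne : F.Nonempty := Finset.card_pos.1 (by omega)
  have hbdd : BddBelow {r : ℝ | ∃ U, IsTwoCover F U ∧ r = coverDiam U} :=
    ⟨0, by rintro _ ⟨U, hU, rfl⟩; exact hU.coverDiam_nonneg hne⟩
  rw [nablaF, csInf_lt_iff hbdd ⟨_, {F}, isTwoCover_singleton hF, rfl⟩]
  constructor
  · rintro ⟨_, ⟨U, hU, rfl⟩, hlt⟩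
    exact ⟨U, hU, hlt⟩
  · rintro ⟨U, hU, hlt⟩
    exact ⟨_, ⟨U, hU, rfl⟩, hlt⟩

end FinDim

open FinDim in
/-- Equivalence: no focal points ↔ existence of a 2-cover of diameter < Δ(F)
↔ ∇(F) < Δ(F). -/
theorem stmt1 {X : Type*} [MetricSpace X] (F : Finset X) (hF : 2 ≤ F.card) :
    ((∀ a, ¬ IsFocal F a) ↔
      ∃ U : Finset (Finset X), IsTwoCover F U ∧ coverDiam U < Metric.diam (F : Set X)) ∧
    ((∃ U : Finset (Finset X), IsTwoCover F U ∧ coverDiam U < Metric.diam (F : Set X)) ↔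
      nablaF F < Metric.diam (F : Set X)) := by
  refine ⟨⟨fun hnf => ?_, fun ⟨U, hU, hlt⟩ => hU.not_isFocal hlt⟩, (nablaF_lt_iff hF).symm⟩
  exact exists_isTwoCover_coverDiam_lt (Finset.card_pos.1 (by omega))
    fun a ha => exists_dist_lt_diam_of_not_isFocal ha (hnf a)
end

section
/- Let η : (X,d) → (X',d') be an (r,β)-Hölder equivalence and let F ⊆ X be a finite subset with at least two points and no focal points. Then η(F) has no focal points and β · dim_fH(η(F)) = dim_fH(F). -/
open Metric

/-!
An `(r, β)`-Hölder equivalence `η` is injective and rescales every diameter by the strictly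
increasing map `t ↦ r t^β`. Hence `U ↦ {η V | V ∈ U}` is a bijection between the 2-coverings
of `F` and those of `η F` that rescales `Δ(𝒰)` in the same way; it therefore matches the optimal
coverings of the two sets and gives `H^s(η F) = r^s H^{βs}(F)`, while `Δ(η F)^s = r^s Δ(F)^{βs}`.
So `s` solves the dimension equation for `η F` exactly when `βs` solves it for `F`, and focal
points of `η F` can only be images of focal points of `F`.
-/

open Metric Function
open scoped Pointwise

-- `hf0` takes care of `S = ∅`, where `sSup ∅ = sInf ∅ = 0` in `ℝ`.
lemma MonotoneOn.map_csSup_of_finite {f : ℝ → ℝ} {S : Set ℝ} (hf : MonotoneOn f S)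
    (hS : S.Finite) (hf0 : f 0 = 0) : f (sSup S) = sSup (f '' S) := by
  rcases S.eq_empty_or_nonempty with rfl | hne
  · simp [hf0]
  · exact ((hf.map_isGreatest
      ⟨hne.csSup_mem hS, fun _ hx => le_csSup hS.bddAbove hx⟩).csSup_eq).symm

lemma MonotoneOn.map_csInf_of_finite {f : ℝ → ℝ} {S : Set ℝ} (hf : MonotoneOn f S)
    (hS : S.Finite) (hf0 : f 0 = 0) : f (sInf S) = sInf (f '' S) := by
  rcases S.eq_empty_or_nonempty with rfl | hne
  · simp [hf0]
  · exact ((hf.map_isLeast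
      ⟨hne.csInf_mem hS, fun _ hx => csInf_le hS.bddBelow hx⟩).csInf_eq).symm

lemma strictMonoOn_const_mul_rpow {r β : ℝ} (hr : 0 < r) (hβ : 0 < β) :
    StrictMonoOn (fun t : ℝ => r * t ^ β) (Set.Ici 0) := fun _ hx _ _ hxy =>
  mul_lt_mul_of_pos_left (Real.rpow_lt_rpow hx hxy hβ) hr

namespace FinDim

variable {X X' : Type*}

section TwoCover

variable {F : Finset X} {U : Finset (Finset X)}

lemma IsTwoCover.subset_powerset (hU : IsTwoCover F U) : U ⊆ F.powerset :=
  fun V hV => Finset.mem_powerset.2 (hU.1 V hV)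

lemma finite_setOf_isTwoCover (F : Finset X) : {U | IsTwoCover F U}.Finite :=
  F.powerset.powerset.finite_toSet.subset fun _ hU =>
    Finset.mem_powerset.2 (IsTwoCover.subset_powerset hU)

variable [DecidableEq X'] {η : X → X'}

lemma IsTwoCover.image (hη : Injective η) (hU : IsTwoCover F U) :
    IsTwoCover (F.image η) (U.image (Finset.image η)) := by
  obtain ⟨hsub, hcard, hcov⟩ := hU
  refine ⟨?_, ?_, ?_⟩
  · simp only [Finset.forall_mem_image]
    exact fun V hV => Finset.image_subset_image (hsub V hV)
  · simp only [Finset.forall_mem_image]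
    exact fun V hV => (Finset.card_image_of_injective V hη).symm ▸ hcard V hV
  · simp only [Finset.forall_mem_image, Finset.exists_mem_image]
    exact fun a ha => (hcov a ha).imp fun V ⟨hV, haV⟩ => ⟨hV, Finset.mem_image_of_mem η haV⟩

lemma isTwoCover_image_iff (hη : Injective η) {U' : Finset (Finset X')} :
    IsTwoCover (F.image η) U' ↔ ∃ U, IsTwoCover F U ∧ U.image (Finset.image η) = U' := by
  refine ⟨fun hU' => ?_, fun ⟨U, hU, hUU'⟩ => hUU' ▸ hU.image hη⟩
  have hU'_sub : U' ⊆ F.powerset.image (Finset.image η) := fun V' hV' =>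
    Finset.mem_image.2 <| (Finset.subset_image_iff.1 (hU'.1 V' hV')).imp
      fun V ⟨hVF, hVV'⟩ => ⟨Finset.mem_powerset.2 hVF, hVV'⟩
  obtain ⟨U, hUF, rfl⟩ := Finset.subset_image_iff.1 hU'_sub
  obtain ⟨-, hcard, hcov⟩ := hU'
  refine ⟨U, ⟨fun V hV => Finset.mem_powerset.1 (hUF hV), fun V hV => ?_, fun a ha => ?_⟩, rfl⟩
  · simpa [Finset.card_image_of_injective V hη] using hcard _ (Finset.mem_image_of_mem _ hV)
  · obtain ⟨_, hV', haV⟩ := hcov (η a) (Finset.mem_image_of_mem η ha)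
    obtain ⟨V, hV, rfl⟩ := Finset.mem_image.1 hV'
    exact ⟨V, hV, hη.mem_finset_image.1 haV⟩

end TwoCover

variable [MetricSpace X] [MetricSpace X']

structure IsHolderEquiv (η : X → X') (r β : ℝ) : Prop where
  r_pos : 0 < r
  exponent_pos : 0 < β
  dist_eq : ∀ x y, dist (η x) (η y) = r * dist x y ^ β

lemma coverDiam_nonneg (U : Finset (Finset X)) : 0 ≤ coverDiam U :=
  Real.sSup_nonneg fun _ ⟨_, _, ht⟩ => ht ▸ diam_nonneg

lemma nablaF_nonneg (F : Finset X) : 0 ≤ nablaF F :=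
  Real.sInf_nonneg fun _ ⟨U, _, ht⟩ => ht ▸ coverDiam_nonneg U

namespace IsHolderEquiv

variable {η : X → X'} {r β : ℝ}

lemma injective (hη : IsHolderEquiv η r β) : Injective η := fun x y hxy => by
  have h := hη.dist_eq x y
  rw [hxy, dist_self, eq_comm, mul_eq_zero, Real.rpow_eq_zero dist_nonneg hη.exponent_pos.ne']
    at h
  exact dist_eq_zero.1 (h.resolve_left hη.r_pos.ne')

lemma strictMonoOn (hη : IsHolderEquiv η r β) :
    StrictMonoOn (fun t : ℝ => r * t ^ β) (Set.Ici 0) :=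
  strictMonoOn_const_mul_rpow hη.r_pos hη.exponent_pos

lemma scale_zero (hη : IsHolderEquiv η r β) : r * (0 : ℝ) ^ β = 0 := by
  rw [Real.zero_rpow hη.exponent_pos.ne', mul_zero]

lemma diam_image (hη : IsHolderEquiv η r β) {A : Set X} (hA : Bornology.IsBounded A) :
    diam (η '' A) = r * diam A ^ β := by
  have hmono := hη.strictMonoOn.monotoneOn
  have hbound : ∀ x ∈ A, ∀ y ∈ A, r * dist x y ^ β ≤ r * diam A ^ β := fun x hx y hy =>
    hmono dist_nonneg diam_nonneg (dist_le_diam_of_mem hA hx hy)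
  have hηA : Bornology.IsBounded (η '' A) := isBounded_iff.2 ⟨_, by
    rintro _ ⟨x, hx, rfl⟩ _ ⟨y, hy, rfl⟩
    exact hη.dist_eq x y ▸ hbound x hx y hy⟩
  refine le_antisymm (diam_le_of_forall_dist_le
    (mul_nonneg hη.r_pos.le (Real.rpow_nonneg diam_nonneg _)) ?_) ?_
  · rintro _ ⟨x, hx, rfl⟩ _ ⟨y, hy, rfl⟩
    exact hη.dist_eq x y ▸ hbound x hx y hy
  · set D := diam (η '' A)
    set ρ := (D / r) ^ (1 / β)
    have hρ : 0 ≤ ρ := Real.rpow_nonneg (div_nonneg diam_nonneg hη.r_pos.le) _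
    have hρD : r * ρ ^ β = D := by
      rw [← Real.rpow_mul (div_nonneg diam_nonneg hη.r_pos.le),
        one_div_mul_cancel hη.exponent_pos.ne', Real.rpow_one, mul_div_cancel₀ _ hη.r_pos.ne']
    have hAρ : diam A ≤ ρ := diam_le_of_forall_dist_le hρ fun x hx y hy => by
      rw [← hη.strictMonoOn.le_iff_le dist_nonneg hρ, hρD, ← hη.dist_eq]
      exact dist_le_diam_of_mem hηA ⟨x, hx, rfl⟩ ⟨y, hy, rfl⟩
    exact hρD ▸ hmono diam_nonneg hρ hAρ

variable [DecidableEq X']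

lemma diam_finset_image (hη : IsHolderEquiv η r β) (V : Finset X) :
    diam ((V.image η : Finset X') : Set X') = r * diam (V : Set X) ^ β := by
  rw [Finset.coe_image, hη.diam_image V.finite_toSet.isBounded]

lemma coverDiam_image (hη : IsHolderEquiv η r β) (U : Finset (Finset X)) :
    coverDiam (U.image (Finset.image η)) = r * coverDiam U ^ β := by
  have hset : {t | ∃ V' ∈ U.image (Finset.image η), t = diam (V' : Set X')}
      = (fun t => r * t ^ β) '' {t | ∃ V ∈ U, t = diam (V : Set X)} := by
    ext t
    simp only [Finset.exists_mem_image, hη.diam_finset_image]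
    simp [eq_comm]
  have hfin : {t | ∃ V ∈ U, t = diam (V : Set X)}.Finite :=
    (U.finite_toSet.image fun V : Finset X => diam (V : Set X)).subset
      fun _ ⟨V, hV, ht⟩ => ⟨V, hV, ht.symm⟩
  rw [coverDiam, coverDiam, hset, ← (hη.strictMonoOn.monotoneOn.mono ?_).map_csSup_of_finite hfin
    hη.scale_zero]
  exact fun _ ⟨_, _, ht⟩ => ht ▸ diam_nonneg

lemma nablaF_image (hη : IsHolderEquiv η r β) (F : Finset X) :
    nablaF (F.image η) = r * nablaF F ^ β := by
  have hset : {t | ∃ U', IsTwoCover (F.image η) U' ∧ t = coverDiam U'}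
      = (fun t => r * t ^ β) '' {t | ∃ U, IsTwoCover F U ∧ t = coverDiam U} := by
    ext t
    simp [isTwoCover_image_iff hη.injective, hη.coverDiam_image, eq_comm]
  have hfin : {t | ∃ U, IsTwoCover F U ∧ t = coverDiam U}.Finite :=
    ((finite_setOf_isTwoCover F).image coverDiam).subset fun _ ⟨U, hU, ht⟩ => ⟨U, hU, ht.symm⟩
  rw [nablaF, nablaF, hset, ← (hη.strictMonoOn.monotoneOn.mono ?_).map_csInf_of_finite hfin
    hη.scale_zero]
  exact fun _ ⟨U, _, ht⟩ => ht ▸ coverDiam_nonneg U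

lemma Hcov_image (hη : IsHolderEquiv η r β) (U : Finset (Finset X)) (s : ℝ) :
    Hcov (U.image (Finset.image η)) s = r ^ s * Hcov U (β * s) := by
  rw [Hcov, Finset.sum_image fun _ _ _ _ h => Finset.image_injective hη.injective h, Hcov,
    Finset.mul_sum]
  refine Finset.sum_congr rfl fun V _ => ?_
  rw [hη.diam_finset_image, Real.mul_rpow hη.r_pos.le (Real.rpow_nonneg diam_nonneg _),
    ← Real.rpow_mul diam_nonneg]

lemma isOptimal_image_iff (hη : IsHolderEquiv η r β) (F : Finset X) (U : Finset (Finset X)) :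
    coverDiam (U.image (Finset.image η)) = nablaF (F.image η) ↔ coverDiam U = nablaF F := by
  rw [hη.coverDiam_image, hη.nablaF_image]
  exact hη.strictMonoOn.injOn.eq_iff (coverDiam_nonneg U) (nablaF_nonneg F)

lemma HH_image (hη : IsHolderEquiv η r β) (F : Finset X) (s : ℝ) :
    HH (F.image η) s = r ^ s * HH F (β * s) := by
  have hset : {h | ∃ U', IsTwoCover (F.image η) U' ∧ coverDiam U' = nablaF (F.image η) ∧
        h = Hcov U' s}
      = r ^ s • {h | ∃ U, IsTwoCover F U ∧ coverDiam U = nablaF F ∧ h = Hcov U (β * s)} := by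
    ext h
    simp only [isTwoCover_image_iff hη.injective, Set.mem_smul_set, Set.mem_ofPred_eq,
      smul_eq_mul]
    constructor
    · rintro ⟨_, ⟨U, hU, rfl⟩, hopt, rfl⟩
      exact ⟨_, ⟨U, hU, (hη.isOptimal_image_iff F U).1 hopt, rfl⟩, (hη.Hcov_image U s).symm⟩
    · rintro ⟨_, ⟨U, hU, hopt, rfl⟩, rfl⟩
      exact ⟨_, ⟨U, hU, rfl⟩, (hη.isOptimal_image_iff F U).2 hopt, (hη.Hcov_image U s).symm⟩
  rw [HH, HH, hset, Real.sInf_smul_of_nonneg (Real.rpow_nonneg hη.r_pos.le s), smul_eq_mul]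

lemma isFocal_of_isFocal_image (hη : IsHolderEquiv η r β) {F : Finset X} {a : X}
    (ha : IsFocal (F.image η) (η a)) : IsFocal F a := by
  obtain ⟨haF, hdist⟩ := ha
  refine ⟨hη.injective.mem_finset_image.1 haF, fun x hx hxa => ?_⟩
  have h := hdist (η x) (Finset.mem_image_of_mem η hx) (hη.injective.ne hxa)
  rw [hη.dist_eq, hη.diam_finset_image] at h
  exact hη.strictMonoOn.injOn dist_nonneg diam_nonneg h

lemma dimfH_image (hη : IsHolderEquiv η r β) (F : Finset X) :
    β * dimfH (F.image η) = dimfH F := by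
  have hβ := hη.exponent_pos
  have hequation : ∀ s, HH (F.image η) s = diam ((F.image η : Finset X') : Set X') ^ s ↔
      HH F (β * s) = diam (F : Set X) ^ (β * s) := fun s => by
    rw [hη.HH_image, hη.diam_finset_image, Real.mul_rpow hη.r_pos.le
      (Real.rpow_nonneg diam_nonneg _), ← Real.rpow_mul diam_nonneg]
    exact mul_right_inj' (Real.rpow_pos_of_pos hη.r_pos s).ne'
  have hset : {s | 0 < s ∧ HH (F.image η) s = diam ((F.image η : Finset X') : Set X') ^ s}
      = β⁻¹ • {s | 0 < s ∧ HH F s = diam (F : Set X) ^ s} := by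
    ext s
    rw [Set.mem_smul_set_iff_inv_smul_mem₀ (inv_ne_zero hβ.ne'), inv_inv, smul_eq_mul]
    simp only [Set.mem_ofPred_eq, hequation, mul_pos_iff_of_pos_left hβ]
  rw [dimfH, dimfH, hset, Real.sInf_smul_of_nonneg (inv_nonneg.2 hβ.le), smul_eq_mul,
    mul_inv_cancel_left₀ hβ.ne']

end IsHolderEquiv

end FinDim

open FinDim in
theorem stmt4_general {X X' : Type*} [MetricSpace X] [MetricSpace X'] [DecidableEq X'] (η : X → X') (r β : ℝ)
    (hr : 0 < r) (hβ : 0 < β)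
    (hη : ∀ x y : X, dist (η x) (η y) = r * dist x y ^ β)
    (F : Finset X) (hfoc : ∀ a, ¬ IsFocal F a) :
    (∀ a, ¬ IsFocal (F.image η) a) ∧
    β * dimfH (F.image η) = dimfH F := by
  have hHolder : IsHolderEquiv η r β := ⟨hr, hβ, hη⟩
  refine ⟨fun b hb => ?_, hHolder.dimfH_image F⟩
  obtain ⟨a, -, rfl⟩ := Finset.mem_image.1 hb.1
  exact hfoc a (hHolder.isFocal_of_isFocal_image hb)

open FinDim in
/-- `β · dim_fH(η(F)) = dim_fH(F)` for an `(r,β)`-Hölder equivalence `η`. -/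
theorem stmt4 {X X' : Type*} [MetricSpace X] [MetricSpace X'] [DecidableEq X'] (η : X → X') (r β : ℝ)
    (hr : 0 < r) (hβ : 0 < β)
    (hη : ∀ x y : X, dist (η x) (η y) = r * dist x y ^ β)
    (F : Finset X) (hF : 2 ≤ F.card) (hfoc : ∀ a, ¬ IsFocal F a) :
    (∀ a, ¬ IsFocal (F.image η) a) ∧
    β * dimfH (F.image η) = dimfH F :=
  stmt4_general η r β hr hβ hη F hfoc
end
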